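/- Let V be a real vector space equipped with a symmetric bilinear form g, and let (e₁,e₂,e₃,e₄) be a null frame for g. Let λ ∈ ℝ with λ ≠ 0 and let f = (f₁,f₂), f̄ = (f̄₁,f̄₂) ∈ ℝ². Define e₄' = λ(e₄ + Σ_{b=1,2} f_b e_b + ¼|f|² e₃); e_a' = Σ_{b=1,2}(δ_{ab} + ½ f̄_a f_b) e_b + ½ f̄_a e₄ + (½ f_a + ⅛|f|² f̄_a) e₃ for a = 1,2; and e₃' = λ⁻¹((1 + ½ f·f̄ + (1/16)|f|²|f̄|²) e₃ + Σ_{b=1,2}(f̄_b + ¼|f̄|² f_b) e_b + ¼|f̄|² e₄). Then (e₁',e₂',e₃',e₄') is again a null frame for g, i.e. g(e₃',e₃') = g(e₄',e₄') = 0, g(e₃',e₄') = -2, g(e_a',e₃') = g(e_a',e₄') = 0 for a = 1,2, and g(e_a',e_b') = δ_{ab} for a,b ∈ {1,2}. -/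

import Mathlib

/-!
The transformation is a composite of three elementary Lorentz transformations of the frame: the
null rotation about `e₃` with parameter `f`, then the null rotation about the resulting `e₄` with
parameter `f̄`, and finally the boost `(e₃, e₄) ↦ (λ⁻¹ e₃, λ e₄)`. Each of them visibly preserves
the null-frame relations, and null rotations about `e₄` are null rotations about `e₃` conjugated by
the swap `e₃ ↔ e₄`.
-/

section

variable {K V : Type*} [AddCommGroup V]

structure IsNullFrame [CommRing K] [Module K V] (g : LinearMap.BilinForm K V) (e₁ e₂ e₃ e₄ : V) :
    Prop where
  e₃_e₃ : g e₃ e₃ = 0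
  e₄_e₄ : g e₄ e₄ = 0
  e₃_e₄ : g e₃ e₄ = -2
  e₁_e₃ : g e₁ e₃ = 0
  e₁_e₄ : g e₁ e₄ = 0
  e₂_e₃ : g e₂ e₃ = 0
  e₂_e₄ : g e₂ e₄ = 0
  e₁_e₁ : g e₁ e₁ = 1
  e₂_e₂ : g e₂ e₂ = 1
  e₁_e₂ : g e₁ e₂ = 0

namespace IsNullFrame

variable {e₁ e₂ e₃ e₄ : V}

theorem swap [CommRing K] [Module K V] {g : LinearMap.BilinForm K V}
    (hg : ∀ x y, g x y = g y x) (h : IsNullFrame g e₁ e₂ e₃ e₄) :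
    IsNullFrame g e₁ e₂ e₄ e₃ where
  e₃_e₃ := h.e₄_e₄
  e₄_e₄ := h.e₃_e₃
  e₃_e₄ := hg e₄ e₃ ▸ h.e₃_e₄
  e₁_e₃ := h.e₁_e₄
  e₁_e₄ := h.e₁_e₃
  e₂_e₃ := h.e₂_e₄
  e₂_e₄ := h.e₂_e₃
  e₁_e₁ := h.e₁_e₁
  e₂_e₂ := h.e₂_e₂
  e₁_e₂ := h.e₁_e₂

theorem boost [Field K] [Module K V] {g : LinearMap.BilinForm K V}
    (h : IsNullFrame g e₁ e₂ e₃ e₄) {c : K} (hc : c ≠ 0) :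
    IsNullFrame g e₁ e₂ (c⁻¹ • e₃) (c • e₄) := by
  obtain ⟨h33, h44, h34, h13, h14, h23, h24, h11, h22, h12⟩ := h
  constructor <;>
    simp only [map_smul, LinearMap.smul_apply, smul_eq_mul, h33, h44, h34, h13, h14, h23, h24,
      h11, h22, h12, mul_zero, mul_inv_cancel_left₀ hc]

theorem nullRotation [Field K] [CharZero K] [Module K V] {g : LinearMap.BilinForm K V}
    (hg : ∀ x y, g x y = g y x) (h : IsNullFrame g e₁ e₂ e₃ e₄) (f₁ f₂ : K) :
    IsNullFrame g (e₁ + (f₁ / 2) • e₃) (e₂ + (f₂ / 2) • e₃) e₃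
      (e₄ + f₁ • e₁ + f₂ • e₂ + ((f₁ ^ 2 + f₂ ^ 2) / 4) • e₃) := by
  obtain ⟨h33, h44, h34, h13, h14, h23, h24, h11, h22, h12⟩ := h
  have h31 : g e₃ e₁ = 0 := hg e₁ e₃ ▸ h13
  have h41 : g e₄ e₁ = 0 := hg e₁ e₄ ▸ h14
  have h32 : g e₃ e₂ = 0 := hg e₂ e₃ ▸ h23
  have h42 : g e₄ e₂ = 0 := hg e₂ e₄ ▸ h24
  have h43 : g e₄ e₃ = -2 := hg e₃ e₄ ▸ h34
  have h21 : g e₂ e₁ = 0 := hg e₁ e₂ ▸ h12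
  constructor <;>
    simp only [map_add, map_smul, LinearMap.add_apply, LinearMap.smul_apply, smul_eq_mul,
      h33, h44, h34, h43, h13, h14, h23, h24, h31, h41, h32, h42, h11, h22, h12, h21] <;>
    ring

end IsNullFrame

end

/-- **General frame transformation (Lemma `Generalframetransf`).**
Given a null frame `(e₁, e₂, e₃, e₄)` for a symmetric bilinear form `g`, a nonzero scalar
`lam` and transition coefficients `f = (f₁, f₂)`, `fb = (fb₁, fb₂)`, the transformed frame
`(e₁', e₂', e₃', e₄')` defined by the general frame-transformation formulas is again a
null frame for `g`. -/
theorem null_frame_transformation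
    {V : Type*} [AddCommGroup V] [Module ℝ V]
    (g : LinearMap.BilinForm ℝ V) (hg : ∀ x y, g x y = g y x)
    (e₁ e₂ e₃ e₄ : V)
    (h33 : g e₃ e₃ = 0) (h44 : g e₄ e₄ = 0) (h34 : g e₃ e₄ = -2)
    (h13 : g e₁ e₃ = 0) (h14 : g e₁ e₄ = 0)
    (h23 : g e₂ e₃ = 0) (h24 : g e₂ e₄ = 0)
    (h11 : g e₁ e₁ = 1) (h22 : g e₂ e₂ = 1) (h12 : g e₁ e₂ = 0)
    (lam f₁ f₂ fb₁ fb₂ : ℝ) (hlam : lam ≠ 0)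
    (e₁' e₂' e₃' e₄' : V)
    (he₄' : e₄' = lam • (e₄ + f₁ • e₁ + f₂ • e₂ + ((f₁ ^ 2 + f₂ ^ 2) / 4) • e₃))
    (he₁' : e₁' = (1 + fb₁ * f₁ / 2) • e₁ + (fb₁ * f₂ / 2) • e₂
        + (fb₁ / 2) • e₄ + (f₁ / 2 + (f₁ ^ 2 + f₂ ^ 2) * fb₁ / 8) • e₃)
    (he₂' : e₂' = (fb₂ * f₁ / 2) • e₁ + (1 + fb₂ * f₂ / 2) • e₂
        + (fb₂ / 2) • e₄ + (f₂ / 2 + (f₁ ^ 2 + f₂ ^ 2) * fb₂ / 8) • e₃)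
    (he₃' : e₃' = lam⁻¹ • ((1 + (f₁ * fb₁ + f₂ * fb₂) / 2
          + (f₁ ^ 2 + f₂ ^ 2) * (fb₁ ^ 2 + fb₂ ^ 2) / 16) • e₃
        + (fb₁ + (fb₁ ^ 2 + fb₂ ^ 2) * f₁ / 4) • e₁
        + (fb₂ + (fb₁ ^ 2 + fb₂ ^ 2) * f₂ / 4) • e₂
        + ((fb₁ ^ 2 + fb₂ ^ 2) / 4) • e₄)) :
    g e₃' e₃' = 0 ∧ g e₄' e₄' = 0 ∧ g e₃' e₄' = -2 ∧
    g e₁' e₃' = 0 ∧ g e₁' e₄' = 0 ∧ g e₂' e₃' = 0 ∧ g e₂' e₄' = 0 ∧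
    g e₁' e₁' = 1 ∧ g e₂' e₂' = 1 ∧ g e₁' e₂' = 0 ∧ g e₂' e₁' = 0 := by
  have frame : IsNullFrame g e₁ e₂ e₃ e₄ := ⟨h33, h44, h34, h13, h14, h23, h24, h11, h22, h12⟩
  -- the ascription puts `Real.commRing` in place of `Field.toCommRing`, so `convert` only
  -- produces goals for the four vectors
  have composite : IsNullFrame g _ _ _ _ :=
    ((((frame.nullRotation hg f₁ f₂).swap hg).nullRotation hg fb₁ fb₂).swap hg).boost hlam
  have frame' : IsNullFrame g e₁' e₂' e₃' e₄' := by
    convert composite using 1 <;> subst_vars <;> module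
  exact ⟨frame'.e₃_e₃, frame'.e₄_e₄, frame'.e₃_e₄, frame'.e₁_e₃, frame'.e₁_e₄, frame'.e₂_e₃,
    frame'.e₂_e₄, frame'.e₁_e₁, frame'.e₂_e₂, frame'.e₁_e₂, hg e₁' e₂' ▸ frame'.e₁_e₂⟩
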